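/- Let n ≥ 0 be an integer and let f(x) = x^{2n}. Then there exists a polynomial r ∈ ℂ[z] of degree at most n−1 such that for all x ∈ ℂ with x ≠ 0, (1/(4x))·(−(x−1)²f(x+1) + (x+1)²f(x−1)) = (1−n)·x^{2n} + r(x²). In particular the operator ½(M₁ − M₂) preserves the degree of polynomials in the grid variable λ_x = x², acting on the leading term with eigenvalue 1−n. -/

import Mathlib

/-!
Write `(x + 1)^(2n) = A(x²) + 2x·B(x²)`; replacing `x` by `-x` gives `(x - 1)^(2n) = A(x²) - 2x·B(x²)`,
and then `-(x - 1)²(x + 1)^(2n) + (x + 1)²(x - 1)^(2n) = 4x·(A - (X + 1)·B)(x²)` because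
`(x ± 1)² = (x² + 1) ± 2x`. Following the leading coefficients through the recursion for `A` and `B`
(multiplication by `(x² + 1) + 2x`) shows that `A` has top term `Xⁿ` and `B` has top term `n·Xⁿ⁻¹`,
so `A - (X + 1)·B` has degree at most `n` and coefficient `1 - n` at `Xⁿ`.
-/

open Polynomial

namespace Polynomial

variable {R : Type*}

theorem degree_erase_lt_of_natDegree_le [Semiring R] {p : R[X]} {n : ℕ} (h : p.natDegree ≤ n) :
    (p.erase n).degree < n := by
  rw [degree_lt_iff_coeff_zero]
  intro m hm
  rw [coeff_erase]
  split_ifs with hmn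
  · rfl
  · exact coeff_eq_zero_of_natDegree_lt (by omega)

variable [CommRing R]

theorem coeff_X_add_one_mul_succ (p : R[X]) (m : ℕ) :
    ((X + 1) * p).coeff (m + 1) = p.coeff m + p.coeff (m + 1) := by
  rw [add_mul, one_mul, coeff_add, coeff_X_mul]

theorem natDegree_X_add_one_mul_le {p : R[X]} {n : ℕ} (h : p.natDegree ≤ n) :
    ((X + 1) * p).natDegree ≤ n + 1 :=
  add_comm n 1 ▸ natDegree_mul_le_of_le (by compute_degree) h

end Polynomial

namespace QuadraticGrid

variable {R : Type*} [CommRing R]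

/- `(x + 1)^(2n) = evenPart n (x²) + 2x · oddPart n (x²)`; the step `n → n + 1` multiplies by
`(x + 1)² = (x² + 1) + 2x`. -/
mutual
noncomputable def evenPart : ℕ → R[X]
  | 0 => 1
  | n + 1 => (X + 1) * evenPart n + 4 * X * oddPart n

noncomputable def oddPart : ℕ → R[X]
  | 0 => 0
  | n + 1 => evenPart n + (X + 1) * oddPart n
end

theorem add_one_pow_two_mul (n : ℕ) (x : R) :
    (x + 1) ^ (2 * n) = (evenPart n).eval (x ^ 2) + 2 * x * (oddPart n).eval (x ^ 2) := by
  induction n with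
  | zero => simp [evenPart, oddPart]
  | succ n ih =>
    simp only [evenPart, oddPart, eval_add, eval_mul, eval_X, eval_one, eval_ofNat]
    rw [mul_add_one, pow_add, ih]
    ring

theorem sub_one_pow_two_mul (n : ℕ) (x : R) :
    (x - 1) ^ (2 * n) = (evenPart n).eval (x ^ 2) - 2 * x * (oddPart n).eval (x ^ 2) := by
  have h := add_one_pow_two_mul n (-x)
  rw [neg_add_eq_sub, ← neg_sub, (even_two_mul n).neg_pow, neg_sq] at h
  rw [h]
  ring

theorem natDegree_le_and_coeff_evenPart_oddPart (n : ℕ) :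
    (evenPart n : R[X]).natDegree ≤ n ∧ (evenPart n : R[X]).coeff n = 1 ∧
      (X * oddPart n : R[X]).natDegree ≤ n ∧ (X * oddPart n : R[X]).coeff n = n := by
  induction n with
  | zero => simp [evenPart, oddPart]
  | succ n ih =>
    obtain ⟨hA, hA', hB, hB'⟩ := ih
    have hA0 : (evenPart n : R[X]).coeff (n + 1) = 0 := coeff_eq_zero_of_natDegree_lt (by omega)
    have hB0 : (X * oddPart n : R[X]).coeff (n + 1) = 0 := coeff_eq_zero_of_natDegree_lt (by omega)
    have hB4 : (4 * X * oddPart n : R[X]) = C 4 * (X * oddPart n) := by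
      rw [mul_assoc, ← C_ofNat]
    have hXB : (X * oddPart (n + 1) : R[X]) = X * evenPart n + (X + 1) * (X * oddPart n) := by
      rw [oddPart]; ring
    rw [evenPart, hB4, hXB]
    refine ⟨?_, ?_, ?_, ?_⟩
    · exact natDegree_add_le_of_degree_le (natDegree_X_add_one_mul_le hA)
        ((natDegree_C_mul_le _ _).trans (by omega))
    · rw [coeff_add, coeff_X_add_one_mul_succ, coeff_C_mul, hA', hA0, hB0]
      ring
    · exact natDegree_add_le_of_degree_le (add_comm n 1 ▸ natDegree_mul_le_of_le natDegree_X_le hA)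
        (natDegree_X_add_one_mul_le hB)
    · rw [coeff_add, coeff_X_add_one_mul_succ, coeff_X_mul, hA', hB', hB0]
      push_cast
      ring

/- `½(M₁ - M₂)` applied to `x^(2n)`, as a polynomial in the grid variable `x²`. -/
noncomputable def halfDiffMonomial (n : ℕ) : R[X] :=
  evenPart n - (X + 1) * oddPart n

theorem eval_halfDiffMonomial (n : ℕ) (x : R) :
    4 * x * (halfDiffMonomial n).eval (x ^ 2) =
      -(x - 1) ^ 2 * (x + 1) ^ (2 * n) + (x + 1) ^ 2 * (x - 1) ^ (2 * n) := by
  rw [add_one_pow_two_mul, sub_one_pow_two_mul, halfDiffMonomial]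
  simp only [eval_sub, eval_mul, eval_add, eval_X, eval_one]
  ring

theorem natDegree_halfDiffMonomial_le (n : ℕ) : (halfDiffMonomial n : R[X]).natDegree ≤ n := by
  obtain ⟨hA, -, hB, -⟩ := natDegree_le_and_coeff_evenPart_oddPart (R := R) n
  have hB' : (oddPart n : R[X]).natDegree ≤ n := natDegree_le_iff_coeff_eq_zero.mpr fun m hm => by
    rw [← coeff_X_mul]; exact coeff_eq_zero_of_natDegree_lt (by omega)
  rw [halfDiffMonomial, add_mul, one_mul]
  exact (natDegree_sub_le_of_le hA (natDegree_add_le_of_degree_le hB hB')).trans (max_self n).le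

theorem coeff_halfDiffMonomial_self (n : ℕ) : (halfDiffMonomial n : R[X]).coeff n = 1 - n := by
  obtain ⟨-, hA, hB, hB'⟩ := natDegree_le_and_coeff_evenPart_oddPart (R := R) n
  have hB0 : (oddPart n : R[X]).coeff n = 0 := by
    rw [← coeff_X_mul]; exact coeff_eq_zero_of_natDegree_lt (by omega)
  rw [halfDiffMonomial, add_mul, one_mul, coeff_sub, coeff_add, hA, hB', hB0, add_zero]

end QuadraticGrid

open QuadraticGrid

/-- On the quadratic grid λ_x = x², the operator ½(M₁ − M₂),
(½(M₁−M₂)f)(x) = (−(x−1)²f(x+1) + (x+1)²f(x−1))/(4x), preserves the degree of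
polynomials in λ_x: on f(x) = x^{2n} it gives (1−n)·x^{2n} plus a polynomial of
degree at most n−1 in x². -/
theorem stmt3 (n : ℕ) (f : ℂ → ℂ) (hf : ∀ x : ℂ, f x = x ^ (2 * n)) :
    ∃ r : Polynomial ℂ, r.degree < (n : WithBot ℕ) ∧
      ∀ x : ℂ, x ≠ 0 →
        (-(x - 1) ^ 2 * f (x + 1) + (x + 1) ^ 2 * f (x - 1)) / (4 * x)
          = ((1 : ℂ) - (n : ℂ)) * x ^ (2 * n) + r.eval (x ^ 2) := by
  refine ⟨(halfDiffMonomial n).erase n,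
    degree_erase_lt_of_natDegree_le (natDegree_halfDiffMonomial_le n), fun x hx => ?_⟩
  have hsplit : (halfDiffMonomial n).eval (x ^ 2) =
      (1 - n) * x ^ (2 * n) + ((halfDiffMonomial n).erase n).eval (x ^ 2) := by
    conv_lhs => rw [← monomial_add_erase (halfDiffMonomial n) n]
    rw [eval_add, eval_monomial, coeff_halfDiffMonomial_self, ← pow_mul]
  rw [hf, hf, div_eq_iff (by simpa using hx), ← eval_halfDiffMonomial, hsplit]
  ring
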